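/- Let (I_1,…,I_{2n}) be a Grassmann necklace of type (n,2n) and let f be its associated bounded affine permutation. If R(I_i) = I_{i'+1} for all i ∈ [2n], where i' = 2n+1−i and indices are taken modulo 2n, then f is symmetric, i.e., f(2n+1−a) = 4n+1−f(a) for all a ∈ ℤ. -/

import Mathlib

/-- `R(I) = [2n] \ {2n+1-i : i ∈ I}` for subsets of `[2n] = {1,…,2n}`. -/
noncomputable def Rset (n : ℕ) (I : Finset ℤ) : Finset ℤ :=
  (Finset.Icc (1 : ℤ) (2 * (n : ℤ))) \ (I.image fun x => 2 * (n : ℤ) + 1 - x)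

/-- A bounded affine permutation of type `(k,n)`. -/
def IsBAP (n k : ℕ) (f : ℤ → ℤ) : Prop :=
  Function.Bijective f ∧
  (∀ i : ℤ, f (i + (n : ℤ)) = f i + (n : ℤ)) ∧
  (∀ i : ℤ, i ≤ f i ∧ f i ≤ i + (n : ℤ)) ∧
  (∑ i ∈ Finset.Icc (1 : ℤ) (n : ℤ), (f i - i)) = (k : ℤ) * (n : ℤ)

/-- A bounded affine permutation of type `(n,2n)` is symmetric if
`f(2n+1-a) = 4n+1-f(a)` for all integers `a`. -/
def IsSymmBAP (n : ℕ) (f : ℤ → ℤ) : Prop :=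
  ∀ a : ℤ, f (2 * (n : ℤ) + 1 - a) = 4 * (n : ℤ) + 1 - f a

/-- `f̄(i)`: the representative in `[1,n]` of `f(i)` modulo `n`. -/
def fbar (n : ℕ) (f : ℤ → ℤ) (i : ℤ) : ℤ := (f i - 1) % (n : ℤ) + 1

open scoped Classical in
/-- The `a`-anti-exceedance set `I_a(f) = {i ∈ [n] : f̄⁻¹(i) >_a i or f(i) = i+n}`,
where `x ≤_a y ↔ (x-a) mod n ≤ (y-a) mod n` is the cyclic shift of the order on `[1,n]`. -/
noncomputable def antiExc (n : ℕ) (f : ℤ → ℤ) (a : ℤ) : Finset ℤ :=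
  (Finset.Icc (1 : ℤ) (n : ℤ)).filter fun i =>
    f i = i + (n : ℤ) ∨
      ∃ j ∈ Finset.Icc (1 : ℤ) (n : ℤ),
        fbar n f j = i ∧ (i - a) % (n : ℤ) < (j - a) % (n : ℤ)

/-- A Grassmann necklace of type `(k,n)`, encoded as an `n`-periodic family of
`k`-subsets of `[1,n]` indexed by `ℤ`. -/
def IsGN (n k : ℕ) (I : ℤ → Finset ℤ) : Prop :=
  (∀ i : ℤ, I (i + (n : ℤ)) = I i) ∧
  ∀ i ∈ Finset.Icc (1 : ℤ) (n : ℤ),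
    I i ⊆ Finset.Icc (1 : ℤ) (n : ℤ) ∧ (I i).card = k ∧
    (i ∈ I i → ∃ j ∈ Finset.Icc (1 : ℤ) (n : ℤ), I (i + 1) = insert j ((I i).erase i)) ∧
    (i ∉ I i → I (i + 1) = I i)

/-- `f` is the bounded affine permutation associated to the Grassmann necklace `I`:
`f̄(i) = j` if `I_{i+1} = (I_i ∖ {i}) ∪ {j}` with `j ≠ i`; `f(i) = i` if `I_{i+1} = I_i`
and `i ∉ I_i`; `f(i) = i+n` if `I_{i+1} = I_i` and `i ∈ I_i`. -/
def GNAssoc (n : ℕ) (I : ℤ → Finset ℤ) (f : ℤ → ℤ) : Prop :=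
  ∀ i ∈ Finset.Icc (1 : ℤ) (n : ℤ),
    (I (i + 1) = I i → i ∉ I i → f i = i) ∧
    (I (i + 1) = I i → i ∈ I i → f i = i + (n : ℤ)) ∧
    (I (i + 1) ≠ I i → fbar n f i ≠ i ∧ I (i + 1) = insert (fbar n f i) ((I i).erase i))

/-- A dual Grassmann necklace of type `(k,n)`, encoded as an `n`-periodic family of
`k`-subsets of `[1,n]` indexed by `ℤ`. -/
def IsDGN (n k : ℕ) (J : ℤ → Finset ℤ) : Prop :=
  (∀ i : ℤ, J (i + (n : ℤ)) = J i) ∧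
  ∀ i ∈ Finset.Icc (1 : ℤ) (n : ℤ),
    J i ⊆ Finset.Icc (1 : ℤ) (n : ℤ) ∧ (J i).card = k ∧
    (i ∈ J (i + 1) → ∃ j ∈ Finset.Icc (1 : ℤ) (n : ℤ), J i = insert j ((J (i + 1)).erase i)) ∧
    (i ∉ J (i + 1) → J i = J (i + 1))

/-- `f` is the bounded affine permutation associated to the dual Grassmann necklace `J`:
`f̄⁻¹(i) = j` if `J_i = (J_{i+1} ∖ {i}) ∪ {j}` with `j ≠ i`; `f(i) = i` if `J_i = J_{i+1}`
and `i ∉ J_{i+1}`; `f(i) = i+n` if `J_i = J_{i+1}` and `i ∈ J_{i+1}`. -/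
def DGNAssoc (n : ℕ) (J : ℤ → Finset ℤ) (f : ℤ → ℤ) : Prop :=
  ∀ i ∈ Finset.Icc (1 : ℤ) (n : ℤ),
    (J i = J (i + 1) → i ∉ J (i + 1) → f i = i) ∧
    (J i = J (i + 1) → i ∈ J (i + 1) → f i = i + (n : ℤ)) ∧
    (J i ≠ J (i + 1) →
      ∃ j ∈ Finset.Icc (1 : ℤ) (n : ℤ),
        j ≠ i ∧ fbar n f j = i ∧ J i = insert j ((J (i + 1)).erase i))

/-- The minor `Δ_I`: determinant of the `k×k` matrix whose columns are the columns `v i`,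
`i ∈ I`, in increasing order (and `0` if `I` does not have exactly `k` elements). -/
noncomputable def Delta {k : ℕ} (v : ℤ → Fin k → ℝ) (I : Finset ℤ) : ℝ :=
  if h : I.card = k then
    Matrix.det (Matrix.of fun r c : Fin k => v (I.orderIsoOfFin h c).1 r)
  else 0

/-- The `k×n` matrix with columns `v 1, …, v n` is totally nonnegative:
it has (full) rank `k` and all maximal minors are nonnegative. -/
def IsTNN (n k : ℕ) (v : ℤ → Fin k → ℝ) : Prop :=
  Submodule.span ℝ (v '' Set.Icc (1 : ℤ) (n : ℤ)) = ⊤ ∧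
  ∀ I ⊆ Finset.Icc (1 : ℤ) (n : ℤ), I.card = k → 0 ≤ Delta v I

/-- `f` is the span-permutation of the periodically extended column family `v`:
`f(i) = min {r ≥ i : v i ∈ span (v (i+1), …, v r)}` (the empty span being `{0}`). -/
def IsSpanPerm {k : ℕ} (v : ℤ → Fin k → ℝ) (f : ℤ → ℤ) : Prop :=
  ∀ i : ℤ, i ≤ f i ∧ v i ∈ Submodule.span ℝ (v '' Set.Ioc i (f i)) ∧
    ∀ r : ℤ, i ≤ r → v i ∈ Submodule.span ℝ (v '' Set.Ioc i r) → f i ≤ r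

/-- `g(i) = max {r ≤ i : v i ∈ span (v r, …, v (i-1))}` (the empty span being `{0}`). -/
def IsRevSpanPerm {k : ℕ} (v : ℤ → Fin k → ℝ) (g : ℤ → ℤ) : Prop :=
  ∀ i : ℤ, g i ≤ i ∧ v i ∈ Submodule.span ℝ (v '' Set.Ico (g i) i) ∧
    ∀ r : ℤ, r ≤ i → v i ∈ Submodule.span ℝ (v '' Set.Ico r i) → r ≤ g i

/-- The matroid `𝓜(M) = {I : Δ_I(M) ≠ 0}` of the `k×n` matrix with columns `v 1, …, v n`. -/
def Mat (n k : ℕ) (v : ℤ → Fin k → ℝ) : Set (Finset ℤ) :=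
  {I | I ⊆ Finset.Icc (1 : ℤ) (n : ℤ) ∧ I.card = k ∧ Delta v I ≠ 0}

/-- `I ≤_a J` for subsets of `[1,n]`: elementwise comparison, after sorting each set in
`≤_a`-increasing order, in the cyclically shifted order `x ≤_a y ↔ (x-a) mod n ≤ (y-a) mod n`. -/
def cycLE (n : ℕ) (a : ℤ) (I J : Finset ℤ) : Prop :=
  List.Forall₂ (· ≤ ·)
    ((I.image fun x => (x - a) % (n : ℤ)).sort (· ≤ ·))
    ((J.image fun x => (x - a) % (n : ℤ)).sort (· ≤ ·))

/-- `Ia` is the `≤_a`-minimal element of the matroid of `v` (i.e. `Ia = I_a(M)`). -/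
def IsCycMin (n k : ℕ) (v : ℤ → Fin k → ℝ) (a : ℤ) (Ia : Finset ℤ) : Prop :=
  Ia ∈ Mat n k v ∧ ∀ J ∈ Mat n k v, cycLE n a Ia J

/-- The columns of `M · xᵢ(c)`, extended `n`-periodically: column `j` with `j ≡ i+1 (mod n)`
becomes `v j + c • v (j-1)`; all other columns are unchanged. -/
def bridgeCol (n : ℕ) (i : ℤ) (c : ℝ) {k : ℕ} (v : ℤ → Fin k → ℝ) : ℤ → Fin k → ℝ :=
  fun j => if (j - (i + 1)) % (n : ℤ) = 0 then v j + c • v (j - 1) else v j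

/-- The `n×2n` matrix with columns `v 1, …, v (2n)` is Plücker-symmetric:
`Δ_{R(I)} = Δ_I` for every `n`-element subset `I ⊆ [2n]`. -/
def PSym (n : ℕ) (v : ℤ → Fin n → ℝ) : Prop :=
  ∀ I ⊆ Finset.Icc (1 : ℤ) (2 * (n : ℤ)), I.card = n → Delta v (Rset n I) = Delta v I

/-- The affine simple transposition `sᵢ` modulo `n`: swaps `j ↔ j+1` for every `j ≡ i (mod n)`
and fixes all other integers. -/
def affS (n : ℕ) (i : ℤ) (j : ℤ) : ℤ :=
  if (j - i) % (n : ℤ) = 0 then j + 1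
  else if (j - (i + 1)) % (n : ℤ) = 0 then j - 1
  else j

/-!
Write `b' = 2n+1-b`. The symmetry `R(I_i) = I_{i'+1}` turns the necklace step `I_b → I_{b+1}`
into the step `I_{b'} = R(I_{b+1}) → I_{b'+1} = R(I_b)`, so `b' ∈ I_{b'}` iff `b ∉ I_{b+1}` and
`b' ∈ I_{b'+1}` iff `b ∉ I_b`. Hence `f b = b` iff `f b' = b' + 2n`, and when the step at `b`
exchanges `b` for `j`, the step at `b'` exchanges `b'` for `2n+1-j`; since `f b ∈ [b, b+2n]` and
`j ≠ b`, the residue `j` determines `f b`. This gives `f b' + f b = 4n+1` for `b ∈ [1,2n]`, and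
both sides are `2n`-periodic.
-/

open Finset

lemma mem_Rset {n : ℕ} {J : Finset ℤ} {x : ℤ} :
    x ∈ Rset n J ↔ x ∈ Icc 1 (2 * (n : ℤ)) ∧ 2 * (n : ℤ) + 1 - x ∉ J := by
  simp only [Rset, mem_sdiff, mem_image, not_exists, not_and]
  refine and_congr_right fun _ => ⟨fun h hx => h _ hx (by ring), ?_⟩
  rintro h y hy rfl
  exact h (by rwa [sub_sub_cancel])

lemma Function.Periodic.exists_mem_Icc_one {β : Type*} {g : ℤ → β} {N : ℤ}
    (hg : Function.Periodic g N) (hN : 0 < N) (x : ℤ) : ∃ y ∈ Icc 1 N, g x = g y := by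
  obtain ⟨y, hy, hxy⟩ := hg.exists_mem_Ico hN x 1
  rw [Set.mem_Ico] at hy
  exact ⟨y, mem_Icc.mpr ⟨hy.1, by omega⟩, hxy⟩

lemma fbar_mem_Icc {N : ℕ} (hN : 0 < N) (f : ℤ → ℤ) (i : ℤ) : fbar N f i ∈ Icc 1 (N : ℤ) := by
  have hN' : (0 : ℤ) < N := by exact_mod_cast hN
  have := Int.emod_nonneg (f i - 1) hN'.ne'
  have := Int.emod_lt_of_pos (f i - 1) hN'
  simp only [fbar, mem_Icc]
  omega

lemma apply_eq_fbar_or_eq_fbar_add {N : ℕ} {f : ℤ → ℤ} {i : ℤ} (hi : i ∈ Icc 1 (N : ℤ))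
    (hfi : i ≤ f i ∧ f i ≤ i + N) : f i = fbar N f i ∨ f i = fbar N f i + N := by
  rw [mem_Icc] at hi
  unfold fbar
  by_cases hlt : f i - 1 < N
  · left
    rw [Int.emod_eq_of_lt (by omega) hlt]
    ring
  · right
    rw [← Int.sub_emod_right, Int.emod_eq_of_lt (by omega) (by omega)]
    ring

namespace IsGN

variable {N k : ℕ} {I : ℤ → Finset ℤ}

lemma card_eq (hI : IsGN N k I) (hN : 0 < N) (i : ℤ) : (I i).card = k := by
  obtain ⟨y, hy, hiy⟩ := Function.Periodic.exists_mem_Icc_one hI.1 (by exact_mod_cast hN) i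
  rw [hiy]
  exact (hI.2 y hy).2.1

lemma notMem_succ (hI : IsGN N k I) {i : ℤ} (hi : i ∈ Icc 1 (N : ℤ)) (h : i ∉ I i) :
    i ∉ I (i + 1) := by
  rwa [(hI.2 i hi).2.2.2 h]

end IsGN

namespace GNAssoc

variable {N k : ℕ} {I : ℤ → Finset ℤ} {f : ℤ → ℤ} {i : ℤ}

lemma apply_eq_self (hI : IsGN N k I) (hf : GNAssoc N I f) (hi : i ∈ Icc 1 (N : ℤ))
    (h : i ∉ I i) : f i = i :=
  (hf i hi).1 ((hI.2 i hi).2.2.2 h) h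

lemma succ_eq_insert_fbar (hf : GNAssoc N I f) (hi : i ∈ Icc 1 (N : ℤ)) (h : I (i + 1) ≠ I i) :
    I (i + 1) = insert (fbar N f i) ((I i).erase i) :=
  ((hf i hi).2.2 h).2

lemma apply_eq_add (hf : GNAssoc N I f) (hi : i ∈ Icc 1 (N : ℤ)) (h : i ∈ I i)
    (h' : i ∈ I (i + 1)) : f i = i + N := by
  refine (hf i hi).2.1 ?_ h
  by_contra hne
  rw [hf.succ_eq_insert_fbar hi hne, mem_insert, mem_erase] at h'
  exact ((hf i hi).2.2 hne).1 (h'.resolve_right (by simp)).symm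

lemma fbar_eq_of_mem_sdiff (hf : GNAssoc N I f) (hi : i ∈ Icc 1 (N : ℤ)) {j : ℤ}
    (hj : j ∈ I (i + 1)) (hj' : j ∉ I i) : fbar N f i = j := by
  have hne : I (i + 1) ≠ I i := fun h => hj' (h ▸ hj)
  rw [hf.succ_eq_insert_fbar hi hne, mem_insert] at hj
  exact (hj.resolve_right fun h => hj' (mem_of_mem_erase h)).symm

lemma fbar_mem_sdiff (hI : IsGN N k I) (hf : GNAssoc N I f) (hi : i ∈ Icc 1 (N : ℤ))
    (h : i ∈ I i) (h' : i ∉ I (i + 1)) : fbar N f i ∈ I (i + 1) ∧ fbar N f i ∉ I i := by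
  have hne : I (i + 1) ≠ I i := fun e => h' (e ▸ h)
  have hins := hf.succ_eq_insert_fbar hi hne
  refine ⟨hins ▸ mem_insert_self _ _, fun hmem => ?_⟩
  have hN : 0 < N := by have := mem_Icc.mp hi; omega
  have hk : 0 < k := hI.card_eq hN i ▸ card_pos.mpr ⟨i, h⟩
  have hcard := congrArg card hins
  rw [insert_eq_of_mem (mem_erase.mpr ⟨((hf i hi).2.2 hne).1, hmem⟩), card_erase_of_mem h,
    hI.card_eq hN, hI.card_eq hN] at hcard
  omega

end GNAssoc

section Reflection

variable {n : ℕ} {I : ℤ → Finset ℤ} {f : ℤ → ℤ}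

lemma IsGN.rset_eq_of_forall_mem_Icc (hI : IsGN (2 * n) n I) (hn : 0 < n)
    (hsym : ∀ i ∈ Icc (1 : ℤ) (2 * (n : ℤ)), Rset n (I i) = I (2 * (n : ℤ) + 2 - i)) (i : ℤ) :
    Rset n (I i) = I (2 * (n : ℤ) + 2 - i) := by
  have hper : Function.Periodic I (2 * (n : ℤ)) := fun i => by simpa using hI.1 i
  have hP : Function.Periodic (fun i => Rset n (I i) = I (2 * (n : ℤ) + 2 - i)) (2 * (n : ℤ)) := by
    intro i
    simp only
    rw [hper i, show 2 * (n : ℤ) + 2 - (i + 2 * n) = 2 * n + 2 - i - 2 * n by ring, hper.sub_eq]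
  obtain ⟨y, hy, hiy⟩ := hP.exists_mem_Icc_one (by positivity) i
  exact hiy ▸ hsym y hy

lemma mem_reflect_iff_notMem (hR : ∀ i, Rset n (I i) = I (2 * (n : ℤ) + 2 - i)) {i j x : ℤ}
    (hij : i + j = 2 * n + 2) (hx : x ∈ Icc 1 (2 * (n : ℤ))) :
    2 * (n : ℤ) + 1 - x ∈ I j ↔ x ∉ I i := by
  have hx' : 2 * (n : ℤ) + 1 - x ∈ Icc 1 (2 * (n : ℤ)) := by
    rw [mem_Icc] at hx ⊢
    omega
  rw [show j = 2 * n + 2 - i by omega, ← hR, mem_Rset, sub_sub_cancel]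
  exact and_iff_right hx'

lemma GNAssoc.apply_reflect_add_apply (hI : IsGN (2 * n) n I) (hf : IsBAP (2 * n) n f)
    (hassoc : GNAssoc (2 * n) I f) (hR : ∀ i, Rset n (I i) = I (2 * (n : ℤ) + 2 - i)) {b : ℤ}
    (hb : b ∈ Icc 1 (2 * (n : ℤ))) : f (2 * n + 1 - b) + f b = 4 * n + 1 := by
  have hN : ((2 * n : ℕ) : ℤ) = 2 * n := by push_cast; ring
  have hb' : 2 * (n : ℤ) + 1 - b ∈ Icc 1 (2 * (n : ℤ)) := by
    rw [mem_Icc] at hb ⊢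
    omega
  have hbN : b ∈ Icc 1 ((2 * n : ℕ) : ℤ) := by rwa [hN]
  have hbN' : 2 * (n : ℤ) + 1 - b ∈ Icc 1 ((2 * n : ℕ) : ℤ) := by rwa [hN]
  have mem_b' := mem_reflect_iff_notMem hR (i := b + 1) (j := 2 * n + 1 - b) (by ring) hb
  have mem_b'_succ := mem_reflect_iff_notMem hR (i := b) (j := 2 * n + 1 - b + 1) (by ring) hb
  by_cases hmem : b ∈ I b
  · by_cases hmem' : b ∈ I (b + 1)
    · rw [hassoc.apply_eq_self hI hbN' fun h => mem_b'.mp h hmem',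
        hassoc.apply_eq_add hbN hmem hmem', hN]
      ring
    · obtain ⟨hj, hj'⟩ := hassoc.fbar_mem_sdiff hI hbN hmem hmem'
      set j := fbar (2 * n) f b
      have hjI : j ∈ Icc 1 (2 * (n : ℤ)) :=
        hN ▸ fbar_mem_Icc (by have := mem_Icc.mp hb; omega) f b
      have hj_ne : j ≠ b := fun e => hmem' (e ▸ hj)
      have hfbar' : fbar (2 * n) f (2 * n + 1 - b) = 2 * n + 1 - j :=
        hassoc.fbar_eq_of_mem_sdiff hbN'
          ((mem_reflect_iff_notMem hR (i := b) (by ring) hjI).mpr hj')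
          fun h => (mem_reflect_iff_notMem hR (i := b + 1) (by ring) hjI).mp h hj
      have hbd := hf.2.2.1 b
      have hbd' := hf.2.2.1 (2 * n + 1 - b)
      have hfb := apply_eq_fbar_or_eq_fbar_add hbN hbd
      have hfb' := apply_eq_fbar_or_eq_fbar_add hbN' hbd'
      rw [hfbar', hN] at hfb'
      rw [hN] at hfb hbd hbd'
      rw [mem_Icc] at hb hjI
      omega
  · rw [hassoc.apply_eq_add hbN' (mem_b'.mpr (hI.notMem_succ hbN hmem)) (mem_b'_succ.mpr hmem),
      hassoc.apply_eq_self hI hbN hmem, hN]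
    ring

lemma isSymmBAP_of_forall_mem_Icc (hn : 0 < n)
    (hper : ∀ i, f (i + 2 * (n : ℤ)) = f i + 2 * (n : ℤ))
    (h : ∀ b ∈ Icc 1 (2 * (n : ℤ)), f (2 * n + 1 - b) + f b = 4 * n + 1) : IsSymmBAP n f := by
  have hg : Function.Periodic (fun a => f (2 * n + 1 - a) + f a) (2 * (n : ℤ)) := by
    intro a
    simp only
    rw [hper a, show 2 * (n : ℤ) + 1 - a = 1 - a + 2 * n by ring, hper (1 - a),
      show 2 * (n : ℤ) + 1 - (a + 2 * n) = 1 - a by ring]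
    ring
  intro a
  obtain ⟨b, hb, hab⟩ := hg.exists_mem_Icc_one (by positivity) a
  have := h b hb
  linarith

end Reflection

/-- If a Grassmann necklace of type `(n,2n)` satisfies `R(I_i) = I_{i'+1}`
for all `i ∈ [2n]` (with `i' = 2n+1-i`, indices mod `2n`), then its associated bounded
affine permutation is symmetric. -/
theorem necklace_symmetry_implies_BAP_symmetric (n : ℕ) (I : ℤ → Finset ℤ)
    (hI : IsGN (2 * n) n I) (f : ℤ → ℤ) (hf : IsBAP (2 * n) n f)
    (hassoc : GNAssoc (2 * n) I f)
    (hsymN : ∀ i ∈ Finset.Icc (1 : ℤ) (2 * (n : ℤ)),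
      Rset n (I i) = I (2 * (n : ℤ) + 2 - i)) :
    IsSymmBAP n f := by
  rcases n.eq_zero_or_pos with rfl | hn
  · intro a
    have h₁ := hf.2.2.1 a
    have h₂ := hf.2.2.1 (1 - a)
    simp only [mul_zero, Nat.cast_zero, add_zero, zero_add] at h₁ h₂ ⊢
    omega
  have hR := hI.rset_eq_of_forall_mem_Icc hn hsymN
  exact isSymmBAP_of_forall_mem_Icc hn (fun i => by simpa using hf.2.1 i)
    fun b hb => hassoc.apply_reflect_add_apply hI hf hR hb
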